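/- (Stabilization via quotient) Let Σ be a BCN with F ∈ L^{N×NM}, M ⊆ Δ_N a target set, and S the equivalence relation with partition {M, Δ_N − M}. Suppose R is an equivalence relation induced by a full row rank C ∈ L^{Ñ×N}, R ⊆ S, and R satisfies the invariance property. Let Σ_R be the quotient system. If a feedback law (x_R, t) ↦ u(x_R, t) stabilizes Σ_R to M_R = {Cx : x ∈ M} (i.e., for every initial state of Σ_R the closed-loop trajectory eventually remains in M_R), then the feedback law (x,t) ↦ u(Cx, t) stabilizes Σ to M. -/
import Mathlib


open Matrix

noncomputable section
open scoped Classical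

/-- The `i`-th canonical basis vector of length `N`. -/
def canon {N : ℕ} (i : Fin N) : Fin N → ℝ := Pi.single i 1

/-- `Delta N` is the set of canonical basis vectors of length `N`. -/
def Delta (N : ℕ) : Set (Fin N → ℝ) := {v | ∃ i, v = canon i}

/-- A logical matrix: every column is a canonical basis vector. -/
def IsLogical {m : ℕ} {J : Type*} (A : Matrix (Fin m) J ℝ) : Prop :=
  ∀ j : J, ∃ i : Fin m, (fun r => A r j) = canon i

/-- Full row rank for a logical matrix: every canonical vector occurs among the columns. -/
def FullRowRank {m : ℕ} {J : Type*} (A : Matrix (Fin m) J ℝ) : Prop :=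
  ∀ i : Fin m, ∃ j : J, (fun r => A r j) = canon i

/-- Semitensor product `F ⋉ u ⋉ x` for a BCN matrix `F ∈ L^{N×NM}`:
`F` times the Kronecker product `u ⊗ x`. -/
def stp {N M : ℕ} (F : Matrix (Fin N) (Fin M × Fin N) ℝ)
    (u : Fin M → ℝ) (x : Fin N → ℝ) : Fin N → ℝ :=
  F.mulVec (fun p => u p.1 * x p.2)

/-- Boolean product of (0,1)-matrices: `(A ⊙ B) i k = ⋁ j, A i j ∧ B j k`. -/
def boolProd {I J K : Type*} (A : Matrix I J ℝ) (B : Matrix J K ℝ) : Matrix I K ℝ :=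
  fun i k => if ∃ j, A i j = 1 ∧ B j k = 1 then 1 else 0

/-- The `N×N` block `F_k = F ⋉ δ_M^k` of `F`. -/
def blockOf {N M : ℕ} (F : Matrix (Fin N) (Fin M × Fin N) ℝ) (k : Fin M) :
    Matrix (Fin N) (Fin N) ℝ :=
  fun r s => F r (k, s)

/-- The matrix `F̃ = [F̃_1 … F̃_M]` of the quotient system, `F̃_k = C ⊙ F_k ⊙ Cᵀ`. -/
def quotMat {N M Nt : ℕ} (F : Matrix (Fin N) (Fin M × Fin N) ℝ)
    (C : Matrix (Fin Nt) (Fin N) ℝ) : Matrix (Fin Nt) (Fin M × Fin Nt) ℝ :=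
  fun i p => boolProd (boolProd C (blockOf F p.1)) Cᵀ i p.2

lemma canon_apply {N : ℕ} (i r : Fin N) : canon i r = if r = i then 1 else 0 := by
  simp [canon, Pi.single_apply]

lemma canon_eq_one_iff {N : ℕ} {i r : Fin N} : canon i r = 1 ↔ r = i := by
  rw [canon_apply]; split <;> simp_all

lemma canon_inj {N : ℕ} {i j : Fin N} (h : canon i = canon j) : i = j := by
  have := congrFun h i
  rw [canon_apply, canon_apply, if_pos rfl] at this
  by_contra hne
  rw [if_neg (by exact fun hh => hne hh)] at this
  exact one_ne_zero this

lemma mulVec_canon {m n : ℕ} (A : Matrix (Fin m) (Fin n) ℝ) (s : Fin n) :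
    A.mulVec (canon s) = fun i => A i s := by
  funext i
  simp [Matrix.mulVec, dotProduct, canon, Pi.single_apply, mul_ite]

lemma stp_canon {N M : ℕ} (F : Matrix (Fin N) (Fin M × Fin N) ℝ) (k : Fin M) (s : Fin N) :
    stp F (canon k) (canon s) = fun r => F r (k, s) := by
  funext r
  unfold stp
  simp only [Matrix.mulVec, dotProduct]
  rw [Fintype.sum_prod_type]
  have h : ∀ a : Fin M, ∀ b : Fin N,
      F r (a, b) * (canon k a * canon s b) = if a = k ∧ b = s then F r (k, s) else 0 := by
    intro a b
    rw [canon_apply, canon_apply]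
    by_cases ha : a = k <;> by_cases hb : b = s <;> simp_all
  simp only [h, ite_and]
  simp [Finset.sum_ite_eq', Finset.sum_ite_eq]

/-- stabilization via quotient: if a feedback law stabilizes the
quotient system `Σ_R` to `M_R = {Cx : x ∈ Mset}`, then the lifted feedback
`(x,t) ↦ u(Cx,t)` stabilizes `Σ` to `Mset`. -/
theorem stmt15 {N M Nt : ℕ} (F : Matrix (Fin N) (Fin M × Fin N) ℝ) (hF : IsLogical F)
    (Mset : Set (Fin N → ℝ)) (hM : Mset ⊆ Delta N)
    (C : Matrix (Fin Nt) (Fin N) ℝ) (hC : IsLogical C) (hfrr : FullRowRank C)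
    -- R ⊆ S, where S is the equivalence relation with partition {Mset, Δ_N − Mset}:
    (hRS : ∀ x ∈ Delta N, ∀ x' ∈ Delta N, C.mulVec x = C.mulVec x' →
      (x ∈ Mset ↔ x' ∈ Mset))
    -- invariance property of R:
    (hinv : ∀ a ∈ Delta N, ∀ b ∈ Delta N, C.mulVec a = C.mulVec b →
      ∀ u ∈ Delta M, C.mulVec (stp F u a) = C.mulVec (stp F u b))
    -- the feedback law for the quotient system, taking values in Δ_M:
    (u : (Fin Nt → ℝ) → ℕ → (Fin M → ℝ)) (hu : ∀ q t, u q t ∈ Delta M)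
    -- it stabilizes Σ_R to M_R:
    (hstab : ∀ xR : ℕ → (Fin Nt → ℝ), xR 0 ∈ Delta Nt →
      (∀ t, xR (t + 1) = stp (quotMat F C) (u (xR t) t) (xR t)) →
      ∃ τ : ℕ, ∀ t ≥ τ, xR t ∈ C.mulVec '' Mset) :
    -- then (x,t) ↦ u(Cx,t) stabilizes Σ to Mset:
    ∀ x : ℕ → (Fin N → ℝ), x 0 ∈ Delta N →
      (∀ t, x (t + 1) = stp F (u (C.mulVec (x t)) t) (x t)) →
      ∃ τ : ℕ, ∀ t ≥ τ, x t ∈ Mset := by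
  -- key commutation: C (F ⋉ u ⋉ x) = F̃ ⋉ u ⋉ (C x) on canonical vectors
  have key : ∀ (s : Fin N) (k : Fin M),
      C.mulVec (stp F (canon k) (canon s)) =
        stp (quotMat F C) (canon k) (C.mulVec (canon s)) := by
    intro s k
    obtain ⟨r, hr⟩ := hF (k, s)
    obtain ⟨i, hi⟩ := hC r
    obtain ⟨j, hj⟩ := hC s
    have hCs : C.mulVec (canon s) = canon j := by rw [mulVec_canon]; exact hj
    have hLHS : C.mulVec (stp F (canon k) (canon s)) = canon i := by
      rw [stp_canon, hr, mulVec_canon]; exact hi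
    rw [hLHS, hCs, stp_canon]
    funext i₀
    show canon i i₀ = quotMat F C i₀ (k, j)
    have hCir : C i r = 1 := by
      have := congrFun hi i; rw [this]; exact canon_eq_one_iff.mpr rfl
    have hFr : F r (k, s) = 1 := by
      have := congrFun hr r; rw [this]; exact canon_eq_one_iff.mpr rfl
    have hCT : Cᵀ s j = 1 := by
      have := congrFun hj j
      rw [Matrix.transpose_apply, this]
      exact canon_eq_one_iff.mpr rfl
    rw [canon_apply]
    unfold quotMat boolProd blockOf
    symm
    by_cases hii : i₀ = i
    · subst hii
      rw [if_pos rfl, if_pos ⟨s, by rw [if_pos ⟨r, hCir, hFr⟩], hCT⟩]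
    · rw [if_neg hii]
      rw [if_neg]
      rintro ⟨s', hinner, hCjs'⟩
      rw [Matrix.transpose_apply] at hCjs'
      have hinner1 : ∃ r', C i₀ r' = 1 ∧ F r' (k, s') = 1 := by
        by_contra hcon
        rw [if_neg hcon] at hinner
        exact one_ne_zero hinner.symm
      obtain ⟨r', hCir', hFr'⟩ := hinner1
      -- column s' of C is canon j
      obtain ⟨j', hj'⟩ := hC s'
      have hjj : j' = j := by
        have := congrFun hj' j
        rw [hCjs'] at this
        exact (canon_eq_one_iff.mp this.symm).symm
      have hCs' : C.mulVec (canon s') = canon j := by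
        rw [mulVec_canon, hj', hjj]
      -- invariance gives C (F ⋉ u ⋉ s') = canon i
      have hinv' := hinv (canon s') ⟨s', rfl⟩ (canon s) ⟨s, rfl⟩
        (by rw [hCs', hCs]) (canon k) ⟨k, rfl⟩
      rw [hLHS] at hinv'
      -- column (k, s') of F is canon r'
      obtain ⟨r'', hr''⟩ := hF (k, s')
      have hrr : r'' = r' := by
        have := congrFun hr'' r'
        rw [hFr'] at this
        exact (canon_eq_one_iff.mp this.symm).symm
      have hstp' : stp F (canon k) (canon s') = canon r' := by
        rw [stp_canon, hr'', hrr]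
      rw [hstp', mulVec_canon] at hinv'
      -- column r' of C is canon i₀ (since C i₀ r' = 1), but equals canon i
      obtain ⟨i', hi'⟩ := hC r'
      have hii' : i' = i₀ := by
        have := congrFun hi' i₀
        rw [hCir'] at this
        exact (canon_eq_one_iff.mp this.symm).symm
      apply hii
      have : canon i' = canon i := by rw [← hi']; exact hinv'
      rw [hii'] at this
      exact canon_inj this
  intro x hx0 hdyn
  -- trajectory stays in Delta N
  have hdelta : ∀ t, x t ∈ Delta N := by
    intro t
    induction t with
    | zero => exact hx0
    | succ t ih =>
      obtain ⟨s, hs⟩ := ih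
      obtain ⟨k, hk⟩ := hu (C.mulVec (x t)) t
      obtain ⟨r, hr⟩ := hF (k, s)
      refine ⟨r, ?_⟩
      rw [hdyn t, hk, hs, stp_canon]
      exact hr
  -- the projected trajectory satisfies the quotient dynamics
  have hxRdyn : ∀ t, C.mulVec (x (t + 1)) =
      stp (quotMat F C) (u (C.mulVec (x t)) t) (C.mulVec (x t)) := by
    intro t
    obtain ⟨s, hs⟩ := hdelta t
    rw [hdyn t, hs]
    obtain ⟨k, hk⟩ := hu (C.mulVec (canon s)) t
    rw [hk]
    exact key s k
  have hxR0 : C.mulVec (x 0) ∈ Delta Nt := by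
    obtain ⟨s, hs⟩ := hx0
    obtain ⟨j, hj⟩ := hC s
    exact ⟨j, by rw [hs, mulVec_canon]; exact hj⟩
  obtain ⟨τ, hτ⟩ := hstab (fun t => C.mulVec (x t)) hxR0 hxRdyn
  refine ⟨τ, fun t ht => ?_⟩
  obtain ⟨m, hm, hcm⟩ := hτ t ht
  exact (hRS (x t) (hdelta t) m (hM hm) hcm.symm).mpr hm
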